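/- Every atom belonging to the least two-valued Herbrand model of a disjunctive definite program P (i.e., to the success set SS of P) is true in every three-valued strong model of P. -/
import Mathlib


open Classical

/-- The three truth values: true, false, inadmissible. -/
inductive TV : Type where
  | t : TV
  | f : TV
  | i : TV
deriving DecidableEq

/-- Kleene strong three-valued conjunction. -/
def TV.and : TV → TV → TV
  | .t, .t => .t
  | .f, _ => .f
  | _, .f => .f
  | _, _ => .i

/-- Kleene strong three-valued disjunction. -/
def TV.or : TV → TV → TV
  | .f, .f => .f
  | .t, _ => .t
  | _, .t => .t
  | _, _ => .i

/-- Ground body formulas over a set `α` of ground atoms: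
built from atoms using binary conjunction and disjunction. -/
inductive Body (α : Type*) : Type _ where
  | atom : α → Body α
  | conj : Body α → Body α → Body α
  | disj : Body α → Body α → Body α

variable {α : Type*}

/-- Value of an atom in the interpretation `⟨I,T⟩` (inadmissible atoms `I`,
true atoms `T`, all other atoms false). -/
noncomputable def atomVal (I T : Set α) (a : α) : TV :=
  if a ∈ T then TV.t else if a ∈ I then TV.i else TV.f

/-- Kleene strong three-valued evaluation of a body formula in `⟨I,T⟩`. -/
noncomputable def beval (I T : Set α) : Body α → TV
  | .atom a => atomVal I T a
  | .conj b c => TV.and (beval I T b) (beval I T c)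
  | .disj b c => TV.or (beval I T b) (beval I T c)

/-- A (ground) disjunctive definite program: a set of ground clause instances
`H ← B`, represented as pairs `(H, B)`. -/
abbrev Program (α : Type*) := Set (α × Body α)

/-- `⟨I,T⟩` is a model of `P`: no clause instance `H ← B` in `P` has `H`
evaluating to F while `B` evaluates to T or I (i.e. head F implies body F). -/
def IsModel (P : Program α) (I T : Set α) : Prop :=
  ∀ c ∈ P, atomVal I T c.1 = TV.f → beval I T c.2 = TV.f

/-- `⟨I,T⟩` is a strong model of `P`: a model such that no clause instance
`H ← B` in `P` has `H` evaluating to I while `B` evaluates to T. -/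
def IsStrongModel (P : Program α) (I T : Set α) : Prop :=
  IsModel P I T ∧ ∀ c ∈ P, atomVal I T c.1 = TV.i → beval I T c.2 ≠ TV.t

/-- Two-valued truth of a body formula in the two-valued interpretation in
which exactly the atoms of `S` are true. -/
def twoVal (S : Set α) : Body α → Prop
  | .atom a => a ∈ S
  | .conj b c => twoVal S b ∧ twoVal S c
  | .disj b c => twoVal S b ∨ twoVal S c

/-- The two-valued immediate consequence operator `T_P`. -/
def TP (P : Program α) (S : Set α) : Set α :=
  {a | ∃ c ∈ P, c.1 = a ∧ twoVal S c.2}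

theorem twoVal_mono {S S' : Set α} (h : S ⊆ S') :
    ∀ B : Body α, twoVal S B → twoVal S' B := by
  intro B
  induction B with
  | atom a => exact fun hb => h hb
  | conj b c ihb ihc => exact fun hb => ⟨ihb hb.1, ihc hb.2⟩
  | disj b c ihb ihc =>
      exact fun hb => hb.elim (fun x => Or.inl (ihb x)) (fun y => Or.inr (ihc y))

/-- `T_P` as a monotone map on sets of atoms. -/
def TPhom (P : Program α) : Set α →o Set α :=
  ⟨TP P, by
    intro S S' h a ha
    obtain ⟨c, hc, he, hb⟩ := ha
    exact ⟨c, hc, he, twoVal_mono h _ hb⟩⟩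

/-- The success set of `P`: the least fixpoint of `T_P`
(equal to the least two-valued Herbrand model of `P`). -/
def SS (P : Program α) : Set α := OrderHom.lfp (TPhom P)

theorem beval_of_twoVal {α : Type*} (I T : Set α) :
    ∀ B : Body α, twoVal T B → beval I T B = TV.t := by
  intro B
  induction B with
  | atom a => intro h; simp [twoVal] at h; simp [beval, atomVal, h]
  | conj b c ihb ihc => intro h; simp [beval, ihb h.1, ihc h.2, TV.and]
  | disj b c ihb ihc =>
      intro h; rcases h with h | h
      · simp [beval, ihb h, TV.or]
      · cases hb : beval I T b <;> simp [beval, hb, ihc h, TV.or]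

/-- Every atom belonging to the least two-valued Herbrand model
of `P` (i.e. to the success set `SS P`) is true in every three-valued strong
model of `P`. -/
theorem SS_subset_true_of_strong_model {α : Type*} (P : Program α)
    (I T : Set α) (hdisj : Disjoint I T) (h : IsStrongModel P I T) :
    SS P ⊆ T := by
  have hpre : TP P T ⊆ T := by
    intro a ha
    obtain ⟨c, hc, he, hb⟩ := ha
    have hbt : beval I T c.2 = TV.t := beval_of_twoVal I T _ hb
    rcases hav : atomVal I T c.1 with _ | _ | _
    · rw [he] at hav; unfold atomVal at hav
      by_contra haT
      simp [haT] at hav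
      split at hav <;> simp_all
    · exact absurd hbt (by rw [h.1 c hc hav]; simp)
    · exact absurd hbt (h.2 c hc hav)
  exact OrderHom.lfp_le (TPhom P) hpre
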